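/- (Lemma 4) Let G=(V,E) be a graph of convex sets with origin s and destination d, h an admissible heuristic, and S a cut-set. Suppose a path P* = (v*_1=s, v*_2, …, v*_k=d) together with points x_{v*_i} ∈ X_{v*_i} attains the optimal cost C_opt(s,d). Let p be the least index with v*_p ∉ S (p exists since d ∉ S), so v*_p ∈ N_S. Then for every subset S' ⊆ N_S with v*_p ∈ S', one has C_opt(s,d) ≥ R*_opt(S,S'). -/

import Mathlib

open scoped BigOperators Pointwise Classical

noncomputable section

/-- A graph of convex sets: a finite directed edge set together with a nonempty
compact convex set in `ℝ^n` attached to each vertex. -/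
structure GCS (V : Type*) (n : ℕ) where
  E : Finset (V × V)
  X : V → Set (EuclideanSpace ℝ (Fin n))
  nonempty : ∀ v, (X v).Nonempty
  compact : ∀ v, IsCompact (X v)
  convex : ∀ v, Convex ℝ (X v)

/-- The cost of a path of `k` vertices with chosen points `x 0, …, x (k-1)`. -/
def pathCost {n : ℕ} (k : ℕ) (x : ℕ → EuclideanSpace ℝ (Fin n)) : ℝ :=
  ∑ i ∈ Finset.range (k - 1), ‖x i - x (i + 1)‖

namespace GCS

variable {V : Type*} {n : ℕ}

/-- `(v 0, …, v (k-1))` is a path in `G` with chosen points `x i ∈ X (v i)`. -/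
def IsPathOn (G : GCS V n) (k : ℕ) (v : ℕ → V) (x : ℕ → EuclideanSpace ℝ (Fin n)) : Prop :=
  1 ≤ k ∧ (∀ i, i + 1 < k → (v i, v (i + 1)) ∈ G.E) ∧ ∀ i, i < k → x i ∈ G.X (v i)

/-- `C_opt(a,b)`: the infimum of path costs over all paths from `a` to `b`
and all choices of points (`⊤` if no such path exists). -/
def Copt (G : GCS V n) (a b : V) : EReal :=
  sInf {c : EReal | ∃ (k : ℕ) (v : ℕ → V) (x : ℕ → EuclideanSpace ℝ (Fin n)),
    G.IsPathOn k v x ∧ v 0 = a ∧ v (k - 1) = b ∧ c = ((pathCost k x : ℝ) : EReal)}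

/-- A heuristic `h` is admissible for destination `d`. -/
def Admissible (G : GCS V n) (d : V) (h : V → ℝ) : Prop :=
  h d = 0 ∧ ∀ v : V, (h v : EReal) ≤ G.Copt v d

/-- The neighborhood `N_S` of a set `S` of vertices. -/
def nbr [Fintype V] (G : GCS V n) (S : Finset V) : Finset V :=
  Finset.univ.filter fun v => v ∉ S ∧ ∃ u ∈ S, (u, v) ∈ G.E

/-- `C*_opt(S,S')`: the infimum over all paths starting at `s`, staying in `S` except
for the last vertex, and ending at a terminal vertex in `S'`, of the path cost plus the
heuristic value of the terminal vertex. -/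
def CstarOpt (G : GCS V n) (h : V → ℝ) (s : V) (S S' : Finset V) : EReal :=
  sInf {c : EReal | ∃ (k : ℕ) (v : ℕ → V) (x : ℕ → EuclideanSpace ℝ (Fin n)),
    G.IsPathOn k v x ∧ v 0 = s ∧ (∀ i, i < k - 1 → v i ∈ S) ∧ v (k - 1) ∈ S' ∧
    c = ((pathCost k x + h (v (k - 1)) : ℝ) : EReal)}

/-- The edge set `Ē` of the subgraph used by SPP*-GCS: edges leaving `S` into `S ∪ S'`. -/
def Ebar (G : GCS V n) (S S' : Finset V) : Finset (V × V) :=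
  G.E.filter fun e => e.1 ∈ S ∧ e.2 ∈ S ∪ S'

end GCS

/-- The perspective `X̄ = {(x, λ) : λ ≥ 0, x ∈ λX}` of a set `X ⊆ ℝ^n`. -/
def persp {n : ℕ} (X : Set (EuclideanSpace ℝ (Fin n))) :
    Set (EuclideanSpace ℝ (Fin n) × ℝ) :=
  {p | 0 ≤ p.2 ∧ p.1 ∈ p.2 • X}

namespace GCS

variable {V : Type*} {n : ℕ}

/-- Feasibility for the convex relaxation of SPP*-GCS on `(S, S')`. -/
def RelaxFeasible (G : GCS V n) (s : V) (S S' : Finset V)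
    (y : V × V → ℝ) (α : V → ℝ) (z z' : V × V → EuclideanSpace ℝ (Fin n)) : Prop :=
  (∀ e ∈ G.Ebar S S', y e ∈ Set.Icc (0 : ℝ) 1) ∧
  (∀ v ∈ S', α v ∈ Set.Icc (0 : ℝ) 1) ∧
  (∑ v ∈ S', α v) = 1 ∧
  (∑ e ∈ (G.Ebar S S').filter fun e => e.1 = s, y e) = 1 ∧
  (∀ v ∈ S', (∑ e ∈ (G.Ebar S S').filter fun e => e.2 = v, y e) = α v) ∧
  (∀ v ∈ S, v ≠ s →
    (∑ e ∈ (G.Ebar S S').filter fun e => e.2 = v, z' e)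
      = (∑ e ∈ (G.Ebar S S').filter fun e => e.1 = v, z e) ∧
    (∑ e ∈ (G.Ebar S S').filter fun e => e.2 = v, y e)
      = (∑ e ∈ (G.Ebar S S').filter fun e => e.1 = v, y e)) ∧
  (∀ e ∈ G.Ebar S S', (z e, y e) ∈ persp (G.X e.1) ∧ (z' e, y e) ∈ persp (G.X e.2))

/-- The objective of the convex relaxation of SPP*-GCS. -/
def relaxObj (G : GCS V n) (h : V → ℝ) (S S' : Finset V)
    (y : V × V → ℝ) (α : V → ℝ) (z z' : V × V → EuclideanSpace ℝ (Fin n)) : ℝ :=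
  (∑ e ∈ G.Ebar S S', ‖z e - z' e‖) + ∑ v ∈ S', α v * h v

/-- `R*_opt(S,S')`: the optimal value of the convex relaxation of SPP*-GCS. -/
def RstarOpt (G : GCS V n) (h : V → ℝ) (s : V) (S S' : Finset V) : EReal :=
  sInf {c : EReal | ∃ y α z z', G.RelaxFeasible s S S' y α z z' ∧
    c = ((G.relaxObj h S S' y α z z' : ℝ) : EReal)}

/-- The optimal value of the MICP for SPP*-GCS (the relaxation with binary `y` and `α`). -/
def MICPval (G : GCS V n) (h : V → ℝ) (s : V) (S S' : Finset V) : EReal :=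
  sInf {c : EReal | ∃ y α z z', G.RelaxFeasible s S S' y α z z' ∧
    (∀ e ∈ G.Ebar S S', y e = 0 ∨ y e = 1) ∧
    (∀ v ∈ S', α v = 0 ∨ α v = 1) ∧
    c = ((G.relaxObj h S S' y α z z' : ℝ) : EReal)}

end GCS

end

/-!
An optimal path first leaves `S` at `v p ∈ N_S`, so its cost splits into the cost of the prefix
`s → v p`, which runs inside `S`, and the cost of the suffix `v p → d`, which is at least
`h (v p)` by admissibility; hence `C_opt(s,d) ≥ C*_opt(S,S')`. On the other hand, erasing loops
makes any path counted in `C*_opt(S,S')` simple without increasing its cost (triangle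
inequality), and a simple path is an integral feasible point of the convex relaxation whose
objective is its cost plus `h` of its endpoint; hence `R*_opt(S,S') ≤ C*_opt(S,S')`.
-/

open Finset

section Splice

variable {α : Type*}

def spliceOut (f : ℕ → α) (a c t : ℕ) : α :=
  if t ≤ a then f t else f (t + c)

variable {f : ℕ → α} {a c t : ℕ}

lemma spliceOut_of_le (ht : t ≤ a) : spliceOut f a c t = f t := if_pos ht

lemma spliceOut_of_lt (ht : a < t) : spliceOut f a c t = f (t + c) := if_neg ht.not_ge

lemma spliceOut_of_ge (hf : f a = f (a + c)) (ht : a ≤ t) : spliceOut f a c t = f (t + c) := by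
  rcases ht.eq_or_lt with rfl | ht
  · rw [spliceOut_of_le le_rfl, hf]
  · exact spliceOut_of_lt ht

lemma sum_dist_spliceOut_le [PseudoMetricSpace α] (f : ℕ → α) (a c r : ℕ) :
    ∑ i ∈ range (a + r), dist (spliceOut f a c i) (spliceOut f a c (i + 1)) ≤
      ∑ i ∈ range (a + c + r), dist (f i) (f (i + 1)) := by
  have hprefix : ∑ i ∈ range a, dist (spliceOut f a c i) (spliceOut f a c (i + 1)) =
      ∑ i ∈ range a, dist (f i) (f (i + 1)) :=
    sum_congr rfl fun i hi => by
      rw [mem_range] at hi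
      rw [spliceOut_of_le hi.le, spliceOut_of_le hi]
  cases r with
  | zero =>
    rw [add_zero, add_zero, hprefix]
    exact sum_le_sum_of_subset_of_nonneg (range_mono (Nat.le_add_right a c))
      fun _ _ _ => dist_nonneg
  | succ r =>
    have hbridge : dist (f a) (f (a + (c + 1))) ≤
        ∑ i ∈ range (c + 1), dist (f (a + i)) (f (a + i + 1)) := by
      simpa [add_assoc] using dist_le_range_sum_dist (fun i => f (a + i)) (c + 1)
    have hsuffix : ∑ i ∈ range r,
          dist (spliceOut f a c (a + 1 + i)) (spliceOut f a c (a + 1 + i + 1)) =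
        ∑ i ∈ range r, dist (f (a + (c + 1) + i)) (f (a + (c + 1) + i + 1)) :=
      sum_congr rfl fun i _ => by
        rw [spliceOut_of_lt (by omega), spliceOut_of_lt (by omega)]
        congr 2 <;> omega
    rw [show a + (r + 1) = a + 1 + r by omega, show a + c + (r + 1) = a + (c + 1) + r by omega,
      sum_range_add _ (a + 1), sum_range_add _ (a + (c + 1)), sum_range_succ, sum_range_add _ a,
      hprefix, hsuffix, spliceOut_of_le le_rfl, spliceOut_of_lt (Nat.lt_succ_self a),
      show a + 1 + c = a + (c + 1) by omega]
    gcongr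

end Splice

lemma sum_range_succ_add_eq {M : Type*} [AddCommMonoid M] (F : ℕ → M) (m : ℕ) :
    ∑ i ∈ range m, F (i + 1) + F 0 = ∑ i ∈ range m, F i + F m :=
  (sum_range_succ' F m).symm.trans (sum_range_succ F m)

lemma pathCost_succ {n m : ℕ} (x : ℕ → EuclideanSpace ℝ (Fin n)) :
    pathCost (m + 1) x = ∑ i ∈ range m, ‖x i - x (i + 1)‖ := by
  rw [pathCost, Nat.add_sub_cancel]

lemma pathCost_eq_add {n k p : ℕ} (x : ℕ → EuclideanSpace ℝ (Fin n)) (hpk : p < k) :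
    pathCost k x = pathCost (p + 1) x + pathCost (k - p) fun i => x (p + i) := by
  simp only [pathCost, Nat.add_sub_cancel, show k - 1 = p + (k - p - 1) by omega, sum_range_add,
    add_assoc]

lemma pathCost_spliceOut_le {n : ℕ} (x : ℕ → EuclideanSpace ℝ (Fin n)) (a c r : ℕ) :
    pathCost (a + r + 1) (spliceOut x a c) ≤ pathCost (a + c + r + 1) x := by
  simpa only [pathCost_succ, dist_eq_norm] using sum_dist_spliceOut_le x a c r

section PathFlow

abbrev pathEdge {α : Type*} (w : ℕ → α) (i : ℕ) : α × α := (w i, w (i + 1))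

lemma injOn_pathEdge {α : Type*} {w : ℕ → α} {m : ℕ} (hw : Set.InjOn w (Set.Iio m)) :
    Set.InjOn (pathEdge w) (Set.Iio m) :=
  fun _ hi _ hj h => hw hi hj (congrArg Prod.fst h)

variable {β M : Type*} [DecidableEq β] [AddCommMonoid M] {m : ℕ} {e : ℕ → β} {g : ℕ → M}

def pathFlow (m : ℕ) (e : ℕ → β) (g : ℕ → M) (b : β) : M :=
  ∑ i ∈ range m, if e i = b then g i else 0

lemma pathFlow_apply (he : Set.InjOn e (Set.Iio m)) {i : ℕ} (hi : i < m) :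
    pathFlow m e g (e i) = g i := by
  rw [pathFlow, sum_eq_single_of_mem i (mem_range.2 hi) fun j hj hji =>
    if_neg fun h => hji (he (Set.mem_Iio.2 (mem_range.1 hj)) (Set.mem_Iio.2 hi) h), if_pos rfl]

lemma pathFlow_eq_zero {b : β} (hb : ∀ i < m, e i ≠ b) : pathFlow m e g b = 0 :=
  sum_eq_zero fun i hi => if_neg (hb i (mem_range.1 hi))

lemma sum_pathFlow (F : Finset β) :
    ∑ b ∈ F, pathFlow m e g b = ∑ i ∈ range m, if e i ∈ F then g i else 0 := by
  simp only [pathFlow]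
  rw [sum_comm]
  exact sum_congr rfl fun i _ => sum_ite_eq F (e i) _

end PathFlow

lemma mem_persp_one {n : ℕ} {X : Set (EuclideanSpace ℝ (Fin n))} {z : EuclideanSpace ℝ (Fin n)} :
    (z, (1 : ℝ)) ∈ persp X ↔ z ∈ X := by
  simp [persp]

lemma zero_mem_persp {n : ℕ} {X : Set (EuclideanSpace ℝ (Fin n))} (hX : X.Nonempty) :
    ((0 : EuclideanSpace ℝ (Fin n)), (0 : ℝ)) ∈ persp X :=
  ⟨le_rfl, by simp [Set.zero_smul_set hX]⟩

namespace GCS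

variable {V : Type*} {n : ℕ} {G : GCS V n} {k : ℕ} {v : ℕ → V} {x : ℕ → EuclideanSpace ℝ (Fin n)}

lemma IsPathOn.take {j : ℕ} (hp : G.IsPathOn k v x) (hj : 1 ≤ j) (hjk : j ≤ k) :
    G.IsPathOn j v x :=
  ⟨hj, fun i hi => hp.2.1 i (by omega), fun i hi => hp.2.2 i (by omega)⟩

lemma IsPathOn.drop {p : ℕ} (hp : G.IsPathOn k v x) (hpk : p < k) :
    G.IsPathOn (k - p) (fun i => v (p + i)) (fun i => x (p + i)) :=
  ⟨by omega, fun i hi => hp.2.1 (p + i) (by omega), fun i hi => hp.2.2 (p + i) (by omega)⟩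

lemma IsPathOn.spliceOut {a c r : ℕ} (hp : G.IsPathOn (a + c + r + 1) v x)
    (hv : v a = v (a + c)) :
    G.IsPathOn (a + r + 1) (_root_.spliceOut v a c) (_root_.spliceOut x a c) := by
  obtain ⟨-, hE, hX⟩ := hp
  refine ⟨by omega, fun i hi => ?_, fun i hi => ?_⟩
  · rcases lt_or_ge i a with hia | hia
    · rw [spliceOut_of_le hia.le, spliceOut_of_le hia]
      exact hE i (by omega)
    · rw [spliceOut_of_ge hv hia, spliceOut_of_ge hv (by omega), add_right_comm]
      exact hE (i + c) (by omega)
  · rcases le_or_gt i a with hia | hia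
    · rw [spliceOut_of_le hia, spliceOut_of_le hia]
      exact hX i (by omega)
    · rw [spliceOut_of_lt hia, spliceOut_of_lt hia]
      exact hX (i + c) (by omega)

theorem IsPathOn.exists_injOn {S : Set V} (hp : G.IsPathOn k v x) (hS : ∀ i < k - 1, v i ∈ S) :
    ∃ k' v' x', G.IsPathOn k' v' x' ∧ v' 0 = v 0 ∧ v' (k' - 1) = v (k - 1) ∧
      (∀ i < k' - 1, v' i ∈ S) ∧ Set.InjOn v' (Set.Iio k') ∧ pathCost k' x' ≤ pathCost k x := by
  induction k using Nat.strong_induction_on generalizing v x with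
  | _ k ih =>
  by_cases hinj : Set.InjOn v (Set.Iio k)
  · exact ⟨k, v, x, hp, rfl, rfl, hS, hinj, le_rfl⟩
  obtain ⟨a, b, hab, hbk, hv⟩ : ∃ a b, a < b ∧ b < k ∧ v a = v b := by
    simp only [Set.InjOn, Set.mem_Iio, not_forall] at hinj
    obtain ⟨i, hi, j, hj, hij, hne⟩ := hinj
    rcases lt_or_gt_of_ne hne with h | h
    exacts [⟨i, j, h, hj, hij⟩, ⟨j, i, h, hi, hij.symm⟩]
  obtain ⟨c, r, rfl, rfl⟩ : ∃ c r, b = a + c ∧ k = a + c + r + 1 :=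
    ⟨b - a, k - 1 - b, by omega, by omega⟩
  have hSsplice : ∀ i < a + r + 1 - 1, _root_.spliceOut v a c i ∈ S := fun i hi => by
    rcases le_or_gt i a with hia | hia
    · rw [spliceOut_of_le hia]; exact hS i (by omega)
    · rw [spliceOut_of_lt hia]; exact hS (i + c) (by omega)
  obtain ⟨k', v', x', hp', h0, hlast, hS', hinj', hcost⟩ :=
    ih (a + r + 1) (by omega) (hp.spliceOut hv) hSsplice
  refine ⟨k', v', x', hp', h0.trans (spliceOut_of_le (Nat.zero_le a)), hlast.trans ?_, hS', hinj',
    hcost.trans (pathCost_spliceOut_le x a c r)⟩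
  simp only [Nat.add_sub_cancel]
  rw [spliceOut_of_ge hv (Nat.le_add_right a r), add_right_comm]

lemma Copt_le_pathCost (hp : G.IsPathOn k v x) : G.Copt (v 0) (v (k - 1)) ≤ pathCost k x :=
  sInf_le ⟨k, v, x, hp, rfl, rfl, rfl⟩

lemma Admissible.le_pathCost {d : V} {h : V → ℝ} (hadm : G.Admissible d h)
    (hp : G.IsPathOn k v x) (hend : v (k - 1) = d) : h (v 0) ≤ pathCost k x :=
  EReal.coe_le_coe_iff.1 ((hadm.2 (v 0)).trans (hend ▸ Copt_le_pathCost hp))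

lemma disjoint_nbr [Fintype V] (S : Finset V) : Disjoint S (G.nbr S) :=
  disjoint_left.2 fun _ hv hv' => (mem_filter.1 hv').2.1 hv

section Relaxation

variable {s : V} {S S' : Finset V} {m : ℕ} {w : ℕ → V}

lemma IsPathOn.edge_mem_Ebar (hp : G.IsPathOn (m + 1) w x) (hwS : ∀ i < m, w i ∈ S)
    (hwm : w m ∈ S') {i : ℕ} (hi : i < m) : pathEdge w i ∈ G.Ebar S S' := by
  refine mem_filter.2 ⟨hp.2.1 i (by omega), hwS i hi, mem_union.2 ?_⟩
  rcases (Nat.succ_le_of_lt hi).eq_or_lt with rfl | h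
  · exact .inr hwm
  · exact .inl (hwS _ h)

lemma IsPathOn.sum_filter_Ebar_pathFlow {M : Type*} [AddCommMonoid M]
    (hp : G.IsPathOn (m + 1) w x) (hwS : ∀ i < m, w i ∈ S) (hwm : w m ∈ S')
    (P : V × V → Prop) [DecidablePred P] (g : ℕ → M) :
    ∑ b ∈ (G.Ebar S S').filter P, pathFlow m (pathEdge w) g b =
      ∑ i ∈ range m, if P (pathEdge w i) then g i else 0 := by
  rw [sum_pathFlow]
  refine sum_congr rfl fun i hi => ?_
  simp only [mem_filter, hp.edge_mem_Ebar hwS hwm (mem_range.1 hi), true_and]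

lemma IsPathOn.flow_conservation {M : Type*} [AddCommMonoid M] (hS' : Disjoint S S')
    (hp : G.IsPathOn (m + 1) w x) (hw0 : w 0 = s)
    (hwS : ∀ i < m, w i ∈ S) (hwm : w m ∈ S') {u : V} (hu : u ∈ S) (hus : u ≠ s) (g : ℕ → M) :
    ∑ b ∈ (G.Ebar S S').filter (fun b => b.2 = u),
        pathFlow m (pathEdge w) (fun i => g (i + 1)) b =
      ∑ b ∈ (G.Ebar S S').filter (fun b => b.1 = u), pathFlow m (pathEdge w) g b := by
  rw [hp.sum_filter_Ebar_pathFlow hwS hwm, hp.sum_filter_Ebar_pathFlow hwS hwm]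
  -- `u` is neither the first nor the last vertex, so arrivals at `u` and departures from it pair up
  have := sum_range_succ_add_eq (fun j => if w j = u then g j else 0) m
  rw [if_neg (hw0 ▸ hus.symm), if_neg fun h : w m = u => disjoint_left.1 hS' hu (h ▸ hwm),
    add_zero, add_zero] at this
  exact this

theorem IsPathOn.relaxFeasible (hs : s ∈ S) (hS' : Disjoint S S')
    (hp : G.IsPathOn (m + 1) w x) (hw0 : w 0 = s) (hwS : ∀ i < m, w i ∈ S) (hwm : w m ∈ S')
    (hinj : Set.InjOn w (Set.Iio m)) :
    G.RelaxFeasible s S S' (pathFlow m (pathEdge w) fun _ => 1)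
      (Pi.single (w m) 1) (pathFlow m (pathEdge w) x)
      (pathFlow m (pathEdge w) fun i => x (i + 1)) := by
  have hedges := injOn_pathEdge hinj
  have hnotS' : ∀ u ∈ S', u ∉ S := fun u hu h => disjoint_left.1 hS' h hu
  have hm : 0 < m := Nat.pos_of_ne_zero fun h => hnotS' _ hwm (by rw [h, hw0]; exact hs)
  refine ⟨fun b _ => ?_, fun u _ => ?_, ?_, ?_, fun u hu => ?_, fun u hu hus => ?_, fun b hb => ?_⟩
  · by_cases hb : ∃ i < m, pathEdge w i = b
    · obtain ⟨i, hi, rfl⟩ := hb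
      rw [pathFlow_apply hedges hi]
      exact ⟨zero_le_one, le_rfl⟩
    · rw [pathFlow_eq_zero fun i hi h => hb ⟨i, hi, h⟩]
      exact ⟨le_rfl, zero_le_one⟩
  · rw [Pi.single_apply]
    split_ifs <;> norm_num
  · rw [sum_pi_single', if_pos hwm]
  · rw [hp.sum_filter_Ebar_pathFlow hwS hwm, sum_eq_single_of_mem 0 (mem_range.2 hm)
      fun i hi hi0 => if_neg fun h => hi0 (hinj (mem_range.1 hi) hm (h.trans hw0.symm)),
      if_pos hw0]
  · have hflow := sum_range_succ_add_eq (fun j => if w j = u then (1 : ℝ) else 0) m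
    rw [if_neg fun h : w 0 = u => hnotS' u hu (h ▸ hw0 ▸ hs),
      sum_eq_zero fun i hi => if_neg fun h : w i = u => hnotS' u hu (h ▸ hwS i (mem_range.1 hi)),
      add_zero, zero_add] at hflow
    rw [hp.sum_filter_Ebar_pathFlow hwS hwm, Pi.single_apply]
    simpa only [eq_comm] using hflow
  · exact ⟨hp.flow_conservation hS' hw0 hwS hwm hu hus x,
      hp.flow_conservation hS' hw0 hwS hwm hu hus fun _ => 1⟩
  · by_cases hb : ∃ i < m, pathEdge w i = b
    · obtain ⟨i, hi, rfl⟩ := hb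
      rw [pathFlow_apply hedges hi, pathFlow_apply hedges hi, pathFlow_apply hedges hi,
        mem_persp_one, mem_persp_one]
      exact ⟨hp.2.2 i (by omega), hp.2.2 (i + 1) (by omega)⟩
    · simp only [pathFlow_eq_zero fun i hi h => hb ⟨i, hi, h⟩]
      exact ⟨zero_mem_persp (G.nonempty _), zero_mem_persp (G.nonempty _)⟩

theorem IsPathOn.relaxObj_eq (h : V → ℝ) (hp : G.IsPathOn (m + 1) w x) (hwS : ∀ i < m, w i ∈ S)
    (hwm : w m ∈ S') (hinj : Set.InjOn w (Set.Iio m)) :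
    G.relaxObj h S S' (pathFlow m (pathEdge w) fun _ => 1)
      (Pi.single (w m) 1) (pathFlow m (pathEdge w) x)
      (pathFlow m (pathEdge w) fun i => x (i + 1)) = pathCost (m + 1) x + h (w m) := by
  have hedges := injOn_pathEdge hinj
  have hnorm : ∀ b, ‖pathFlow m (pathEdge w) x b -
      pathFlow m (pathEdge w) (fun i => x (i + 1)) b‖ =
        pathFlow m (pathEdge w) (fun i => ‖x i - x (i + 1)‖) b := fun b => by
    by_cases hb : ∃ i < m, pathEdge w i = b
    · obtain ⟨i, hi, rfl⟩ := hb
      rw [pathFlow_apply hedges hi, pathFlow_apply hedges hi, pathFlow_apply hedges hi]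
    · simp only [pathFlow_eq_zero fun i hi h => hb ⟨i, hi, h⟩, sub_zero, norm_zero]
  rw [relaxObj, sum_congr rfl fun b _ => hnorm b, sum_pathFlow, pathCost_succ]
  congr 1
  · exact sum_congr rfl fun i hi => if_pos (hp.edge_mem_Ebar hwS hwm (mem_range.1 hi))
  · simp [Pi.single_apply, ite_mul, hwm]

theorem RstarOpt_le_CstarOpt (h : V → ℝ) (hs : s ∈ S) (hS' : Disjoint S S') :
    G.RstarOpt h s S S' ≤ G.CstarOpt h s S S' := by
  refine le_sInf ?_
  rintro _ ⟨k, w, x, hp, hw0, hwS, hwk, rfl⟩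
  obtain ⟨k', w', x', hp', hw0', hwk', hwS', hinj, hcost⟩ := hp.exists_injOn (S := ↑S) hwS
  obtain ⟨m, rfl⟩ : ∃ m, k' = m + 1 := ⟨k' - 1, by have := hp'.1; omega⟩
  rw [Nat.add_sub_cancel] at hwk' hwS'
  have hwm : w' m ∈ S' := hwk' ▸ hwk
  have hinj' := hinj.mono (Set.Iio_subset_Iio (Nat.le_succ m))
  calc G.RstarOpt h s S S' ≤ ((pathCost (m + 1) x' + h (w' m) : ℝ) : EReal) :=
        sInf_le ⟨_, _, _, _, hp'.relaxFeasible hs hS' (hw0'.trans hw0) hwS' hwm hinj',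
          by rw [hp'.relaxObj_eq h hwS' hwm hinj']⟩
    _ ≤ ((pathCost k x + h (w (k - 1)) : ℝ) : EReal) :=
        EReal.coe_le_coe_iff.2 (by rw [hwk']; linarith)

end Relaxation

end GCS

theorem stmt6_general {V : Type*} [Fintype V] {n : ℕ} (G : GCS V n) (s d : V) (h : V → ℝ)
    (hadm : G.Admissible d h)
    (S : Finset V) (hs : s ∈ S)
    (k : ℕ) (v : ℕ → V) (x : ℕ → EuclideanSpace ℝ (Fin n))
    (hpath : G.IsPathOn k v x) (hstart : v 0 = s) (hend : v (k - 1) = d)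
    (hopt : ((pathCost k x : ℝ) : EReal) = G.Copt s d)
    (p : ℕ) (hpk : p < k) (hpS : v p ∉ S) (hleast : ∀ i, i < p → v i ∈ S) :
    v p ∈ G.nbr S ∧
    ∀ S' : Finset V, S' ⊆ G.nbr S → v p ∈ S' → G.RstarOpt h s S S' ≤ G.Copt s d := by
  have hp0 : p ≠ 0 := by
    rintro rfl
    exact hpS (hstart ▸ hs)
  have hedge : (v (p - 1), v p) ∈ G.E := by
    simpa [Nat.sub_add_cancel (Nat.one_le_iff_ne_zero.2 hp0)] using hpath.2.1 (p - 1) (by omega)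
  refine ⟨mem_filter.2 ⟨mem_univ _, hpS, v (p - 1), hleast _ (by omega), hedge⟩,
    fun S' hS' hpS' => ?_⟩
  have hsuffix : h (v p) ≤ pathCost (k - p) fun i => x (p + i) :=
    hadm.le_pathCost (hpath.drop hpk) (by rw [← hend]; congr 1; omega)
  calc G.RstarOpt h s S S' ≤ G.CstarOpt h s S S' :=
        GCS.RstarOpt_le_CstarOpt h hs ((GCS.disjoint_nbr S).mono_right hS')
    _ ≤ ((pathCost (p + 1) x + h (v p) : ℝ) : EReal) :=
        sInf_le ⟨p + 1, v, x, hpath.take (by omega) hpk, hstart, by simpa using hleast, hpS', rfl⟩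
    _ ≤ pathCost k x :=
        EReal.coe_le_coe_iff.2 (by rw [pathCost_eq_add x hpk]; linarith)
    _ = G.Copt s d := hopt

/-- Lemma 4: If an optimal path for SPP-GCS leaves the cut-set `S` for the
first time at its `p`-th vertex `v p`, then `v p ∈ N_S`, and for every `S' ⊆ N_S`
containing `v p` we have `C_opt(s,d) ≥ R*_opt(S,S')`. -/
theorem stmt6 {V : Type*} [Fintype V] {n : ℕ} (G : GCS V n) (s d : V) (h : V → ℝ)
    (hadm : G.Admissible d h)
    (S : Finset V) (hs : s ∈ S) (hd : d ∉ S)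
    (k : ℕ) (v : ℕ → V) (x : ℕ → EuclideanSpace ℝ (Fin n))
    (hpath : G.IsPathOn k v x) (hstart : v 0 = s) (hend : v (k - 1) = d)
    (hopt : ((pathCost k x : ℝ) : EReal) = G.Copt s d)
    (p : ℕ) (hpk : p < k) (hpS : v p ∉ S) (hleast : ∀ i, i < p → v i ∈ S) :
    v p ∈ G.nbr S ∧
    ∀ S' : Finset V, S' ⊆ G.nbr S → v p ∈ S' → G.RstarOpt h s S S' ≤ G.Copt s d :=
  stmt6_general G s d h hadm S hs k v x hpath hstart hend hopt p hpk hpS hleast
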